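/- (Frolov lattice) For every integer d ≥ 2 there exists an invertible real d×d matrix A such that the lattice L = {A·m : m ∈ ℤ^d} has the following two properties: (1) for every m ∈ ℤ^d with m ≠ 0, |∏_{j=1}^d (A·m)_j| ≥ 1; (2) every axis-parallel box P = ∏_{j=1}^d [a_j, b_j) ⊂ ℝ^d contains at most vol(P) + 1 points of L, where vol(P) = ∏_{j=1}^d (b_j − a_j). -/

import Mathlib

/-!
Take `A` to be the Vandermonde matrix `(r_j ^ i)` of the roots of Frolov's polynomial
`P = ∏_{i<d} (X - 4i) - 1`. Since `P` is `-1` at each `4i`, any factorisation `P = f g` into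
monic factors of positive degree forces `f + g` to vanish at `d` points, so `f = -g`; hence `P`
is irreducible. Since `(-1)^(d-j) P(4j - 2) > 0`, `P` has a real root in each interval
`(4j - 2, 4j + 2)`, so `P` has `d` distinct real roots. For `m ≠ 0` put `g = ∑ m_i X^i`; then
`∏_j (A m)_j = ∏_j g(r_j)` is the resultant of `P` and `g`, an integer, nonzero because `P` is
irreducible of larger degree than `g`.

For the count in a box `B`, cut `B` along one coordinate into `⌊vol B⌋ + 1` slabs of volume
`< 1`. Two distinct lattice points `x, y` in the same slab would give `∏_j |x_j - y_j| < 1`,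
while the first property applied to their difference gives `≥ 1`; so each slab holds at most
one point.
-/

open Polynomial Finset

theorem exists_mem_Ioo_eq_zero_of_mul_neg {α : Type*} [ConditionallyCompleteLinearOrder α]
    [TopologicalSpace α] [OrderTopology α] [DenselyOrdered α] {f : α → ℝ} {a b : α}
    (hab : a ≤ b) (hf : ContinuousOn f (Set.Icc a b)) (h : f a * f b < 0) :
    ∃ x ∈ Set.Ioo a b, f x = 0 := by
  rcases mul_neg_iff.mp h with ⟨ha, hb⟩ | ⟨ha, hb⟩
  · exact intermediate_value_Ioo' hab hf ⟨hb, ha⟩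
  · exact intermediate_value_Ioo hab hf ⟨ha, hb⟩

section BoxCount

variable {ι : Type*} [Fintype ι]

theorem abs_sub_lt_of_floor_div_eq {ℓ u v : ℝ} (hℓ : 0 < ℓ) (h : ⌊u / ℓ⌋ = ⌊v / ℓ⌋) :
    |u - v| < ℓ := by
  have := Int.abs_sub_lt_one_of_floor_eq_floor h
  rwa [← sub_div, abs_div, abs_of_pos hℓ, div_lt_one hℓ] at this

theorem prod_abs_sub_le_div_of_floor_eq {a b y z : ι → ℝ} {j₀ : ι} {n : ℝ} (hn : 0 < n)
    (hy : y ∈ Set.univ.pi fun j => Set.Ico (a j) (b j))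
    (hz : z ∈ Set.univ.pi fun j => Set.Ico (a j) (b j))
    (h : ⌊(y j₀ - a j₀) / ((b j₀ - a j₀) / n)⌋ = ⌊(z j₀ - a j₀) / ((b j₀ - a j₀) / n)⌋) :
    ∏ j, |y j - z j| ≤ (∏ j, (b j - a j)) / n := by
  classical
  have hy' : ∀ j, y j ∈ Set.Ico (a j) (b j) := fun j => hy j (Set.mem_univ j)
  have hz' : ∀ j, z j ∈ Set.Ico (a j) (b j) := fun j => hz j (Set.mem_univ j)
  have hside : ∀ j, |y j - z j| ≤ b j - a j := fun j => by
    rw [abs_sub_le_iff]; constructor <;> linarith [(hy' j).1, (hy' j).2, (hz' j).1, (hz' j).2]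
  have hℓ : 0 < (b j₀ - a j₀) / n := div_pos (by linarith [(hy' j₀).1, (hy' j₀).2]) hn
  have hslab : |y j₀ - z j₀| ≤ (b j₀ - a j₀) / n := by
    simpa using (abs_sub_lt_of_floor_div_eq hℓ h).le
  rw [← mul_prod_erase univ _ (mem_univ j₀),
    ← mul_prod_erase univ (fun j => b j - a j) (mem_univ j₀), mul_div_right_comm]
  exact mul_le_mul hslab (prod_le_prod (fun _ _ => abs_nonneg _) fun j _ => hside j)
    (prod_nonneg fun _ _ => abs_nonneg _) hℓ.le

theorem finite_and_card_le_prod_add_one [Nonempty ι] {α : Type*} {x : α → ι → ℝ}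
    (hx : ∀ m m', m ≠ m' → 1 ≤ ∏ j, |x m j - x m' j|) (a b : ι → ℝ) (hab : ∀ j, a j ≤ b j) :
    {m | x m ∈ Set.univ.pi fun j => Set.Ico (a j) (b j)}.Finite ∧
      (Nat.card {m | x m ∈ Set.univ.pi fun j => Set.Ico (a j) (b j)} : ℝ) ≤
        ∏ j, (b j - a j) + 1 := by
  obtain ⟨j₀⟩ := ‹Nonempty ι›
  set S := {m | x m ∈ Set.univ.pi fun j => Set.Ico (a j) (b j)}
  set V := ∏ j, (b j - a j)
  have hV : 0 ≤ V := prod_nonneg fun j _ => sub_nonneg.mpr (hab j)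
  set n := ⌊V⌋₊ + 1
  have hn : (0 : ℝ) < n := by positivity
  set F : α → ℤ := fun m => ⌊(x m j₀ - a j₀) / ((b j₀ - a j₀) / n)⌋
  have hmaps : Set.MapsTo F S (Set.Ico 0 n) := fun m hm => by
    obtain ⟨h₁, h₂⟩ := hm j₀ (Set.mem_univ j₀)
    have hℓ : 0 < (b j₀ - a j₀) / n := div_pos (by linarith) hn
    refine ⟨Int.floor_nonneg.mpr (div_nonneg (by linarith) hℓ.le), Int.floor_lt.mpr ?_⟩
    rw [div_lt_iff₀ hℓ, Int.cast_natCast, mul_div_cancel₀ _ hn.ne']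
    linarith
  have hinj : Set.InjOn F S := fun m hm m' hm' hF => by
    by_contra hne
    have := (hx m m' hne).trans (prod_abs_sub_le_div_of_floor_eq hn hm hm' hF)
    rw [le_div_iff₀ hn, one_mul] at this
    exact (Nat.lt_floor_add_one V).not_ge (by exact_mod_cast this)
  refine ⟨(Set.finite_Ico _ _).of_injOn hmaps hinj, ?_⟩
  have hcard : Nat.card S ≤ n := by
    rw [Nat.card_coe_set_eq]
    have := Set.ncard_le_ncard_of_injOn F hmaps hinj (Set.finite_Ico _ _)
    rwa [← Finset.coe_Ico, Set.ncard_coe_finset, Int.card_Ico, sub_zero, Int.toNat_natCast] at this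
  calc (Nat.card S : ℝ) ≤ n := by exact_mod_cast hcard
    _ ≤ V + 1 := by push_cast [n]; linarith [Nat.floor_le hV]

end BoxCount

namespace Polynomial

section
variable {R ι : Type*} [CommRing R] [Nontrivial R] [Fintype ι]

theorem natDegree_prod_X_sub_C (c : ι → R) :
    (∏ i, (X - C (c i))).natDegree = Fintype.card ι := by
  simp [natDegree_prod_of_monic _ _ fun i _ => monic_X_sub_C (c i)]

variable [Nonempty ι]

theorem natDegree_prod_X_sub_C_sub_one (c : ι → R) :
    (∏ i, (X - C (c i)) - 1).natDegree = Fintype.card ι := by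
  rw [natDegree_sub_eq_left_of_natDegree_lt, natDegree_prod_X_sub_C]
  simpa [natDegree_prod_X_sub_C] using Fintype.card_pos

theorem monic_prod_X_sub_C_sub_one (c : ι → R) : (∏ i, (X - C (c i)) - 1).Monic := by
  have hQ : (∏ i, (X - C (c i))).Monic := monic_prod_X_sub_C c univ
  refine hQ.sub_of_left (degree_one_le.trans_lt ?_)
  rw [degree_eq_natDegree hQ.ne_zero, natDegree_prod_X_sub_C]
  exact_mod_cast Fintype.card_pos

end

theorem irreducible_prod_X_sub_C_sub_one {ι : Type*} [Fintype ι] [Nonempty ι] {c : ι → ℤ}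
    (hc : Function.Injective c) : Irreducible (∏ i, (X - C (c i)) - 1) := by
  refine (monic_prod_X_sub_C_sub_one c).irreducible_iff_natDegree.mpr
    ⟨fun h => ?_, fun f g hf hg hfg => ?_⟩
  · have := natDegree_prod_X_sub_C_sub_one c
    rw [h, natDegree_one] at this
    exact Fintype.card_ne_zero this.symm
  by_contra! hdeg_pos
  have hnode : ∀ i, (f + g).eval (c i) = 0 := fun i => by
    have : f.eval (c i) * g.eval (c i) = -1 := by
      rw [← eval_mul, hfg]
      simp [eval_prod, Finset.prod_eq_zero (Finset.mem_univ i)]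
    rcases Int.eq_one_or_neg_one_of_mul_eq_neg_one' this with ⟨h1, h2⟩ | ⟨h1, h2⟩ <;>
      simp [h1, h2]
  have hdeg : f.natDegree + g.natDegree = Fintype.card ι := by
    rw [← hf.natDegree_mul hg, hfg, natDegree_prod_X_sub_C_sub_one]
  have hsum : f + g = 0 := eq_zero_of_natDegree_lt_card_of_eval_eq_zero _ hc hnode
    ((natDegree_add_le f g).trans_lt (by omega))
  have := hg.leadingCoeff
  rw [← neg_eq_of_add_eq_zero_right hsum, leadingCoeff_neg, hf.leadingCoeff] at this
  omega

theorem prod_aeval_eq_algebraMap_resultant {R K : Type*} [CommRing R] [Field K] [Algebra R K]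
    {P : R[X]} (hP : P.Monic) (g : R[X]) {d : ℕ} (hd : P.natDegree = d) {r : Fin d → K}
    (hr : Function.Injective r) (hroot : ∀ j, aeval (r j) P = 0) :
    ∏ j, aeval (r j) g = algebraMap R K (resultant P g) := by
  set PK := P.map (algebraMap R K)
  have hdeg : PK.natDegree = d := by rw [hP.natDegree_map, hd]
  have hroots : (univ.val.map r : Multiset K) = PK.roots := by
    refine Multiset.eq_of_le_of_card_le ?_ (by simpa [hdeg] using card_roots' PK)
    refine (Multiset.le_iff_subset (univ.nodup.map hr)).mpr fun x hx => ?_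
    obtain ⟨j, -, rfl⟩ := Multiset.mem_map.mp hx
    exact (mem_roots (hP.map _).ne_zero).mpr (by simpa [aeval_def, eval_map] using hroot j)
  have hsplit : PK.Splits := by
    rw [splits_iff_card_roots, ← hroots, hdeg]; simp
  have := resultant_eq_prod_eval PK (g.map (algebraMap R K)) g.natDegree natDegree_map_le hsplit
  rw [(hP.map _).leadingCoeff, one_pow, one_mul, ← hroots, hP.natDegree_map,
    resultant_map_map] at this
  rw [this, Multiset.map_map]
  simp [aeval_def, eval_map, Finset.prod]

theorem resultant_ne_zero_of_irreducible {P g : ℤ[X]} (hP : P.Monic) (hirr : Irreducible P)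
    (hg : g ≠ 0) (hdeg : g.natDegree < P.natDegree) : resultant P g ≠ 0 := by
  have hirrℚ := (IsPrimitive.Int.irreducible_iff_irreducible_map_cast hP.isPrimitive).mp hirr
  have hinj : Function.Injective (Int.castRingHom ℚ) := Int.cast_injective
  have hcop : IsCoprime (P.map (Int.castRingHom ℚ)) (g.map (Int.castRingHom ℚ)) := by
    refine hirrℚ.coprime_iff_not_dvd.mpr fun hdvd => ?_
    have := natDegree_le_of_dvd hdvd ((Polynomial.map_ne_zero_iff hinj).mpr hg)
    rw [natDegree_map_eq_of_injective hinj, natDegree_map_eq_of_injective hinj] at this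
    omega
  have := resultant_ne_zero _ _ hcop
  rwa [natDegree_map_eq_of_injective hinj, natDegree_map_eq_of_injective hinj, resultant_map_map,
    map_ne_zero_iff _ hinj] at this

theorem coeff_sum_fin_C_mul_X_pow {R : Type*} [Semiring R] {d : ℕ} (m : Fin d → R)
    (i : Fin d) : (∑ k : Fin d, C (m k) * X ^ (k : ℕ)).coeff i = m i := by
  simp [finsetSum_coeff, Fin.val_inj]

theorem aeval_intCast {A : Type*} [Ring A] (P : ℤ[X]) (z : ℤ) :
    aeval (z : A) P = ((P.eval z : ℤ) : A) := by
  simpa using aeval_algebraMap_apply A z P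

end Polynomial

theorem one_le_abs_prod_vandermonde_mulVec {P : ℤ[X]} (hP : P.Monic) (hirr : Irreducible P)
    {d : ℕ} (hd : P.natDegree = d) {r : Fin d → ℝ} (hr : Function.Injective r)
    (hroot : ∀ j, aeval (r j) P = 0) {m : Fin d → ℤ} (hm : m ≠ 0) :
    1 ≤ |∏ j, (Matrix.vandermonde r).mulVec (fun i => (m i : ℝ)) j| := by
  set g : ℤ[X] := ∑ k : Fin d, C (m k) * X ^ (k : ℕ)
  have hg : g ≠ 0 := fun h => hm (funext fun i => by
    simpa only [g, coeff_sum_fin_C_mul_X_pow, coeff_zero, Pi.zero_apply]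
      using congrArg (coeff · i) h)
  have hgdeg : g.natDegree < P.natDegree := by
    rw [hd, natDegree_lt_iff_degree_lt hg]
    exact degree_sum_fin_lt m
  have hvec : ∀ j, (Matrix.vandermonde r).mulVec (fun i => (m i : ℝ)) j = aeval (r j) g := by
    intro j
    simp [g, Matrix.mulVec, dotProduct, Matrix.vandermonde, mul_comm]
  rw [Finset.prod_congr rfl fun j _ => hvec j, prod_aeval_eq_algebraMap_resultant hP g hd hr hroot,
    algebraMap_int_eq, eq_intCast, ← Int.cast_abs]
  exact_mod_cast Int.one_le_abs (resultant_ne_zero_of_irreducible hP hirr hg hgdeg)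

noncomputable def frolovPoly (d : ℕ) : ℤ[X] := ∏ i : Fin d, (X - C (4 * (i : ℤ))) - 1

theorem two_pow_le_neg_one_pow_mul_prod_range {d j : ℕ} (hj : j ≤ d) :
    (2 : ℤ) ^ d ≤ (-1) ^ (d - j) * ∏ i ∈ range d, (4 * j - 2 - 4 * i : ℤ) := by
  have hsign : ∏ i ∈ Ico j d, (4 * j - 2 - 4 * i : ℤ) =
      (-1) ^ (d - j) * ∏ i ∈ Ico j d, (4 * i + 2 - 4 * j : ℤ) := by
    rw [← Nat.card_Ico, ← prod_neg]
    exact prod_congr rfl fun i _ => by ring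
  have hlow : (2 : ℤ) ^ j ≤ ∏ i ∈ range j, (4 * j - 2 - 4 * i : ℤ) := by
    simpa using prod_le_prod (s := range j) (f := fun _ => (2 : ℤ)) (fun _ _ => zero_le_two)
      fun i hi => by have := mem_range.mp hi; omega
  have hhigh : (2 : ℤ) ^ (d - j) ≤ ∏ i ∈ Ico j d, (4 * i + 2 - 4 * j : ℤ) := by
    simpa using prod_le_prod (s := Ico j d) (f := fun _ => (2 : ℤ)) (fun _ _ => zero_le_two)
      fun i hi => by have := (mem_Ico.mp hi).1; omega
  have hsq : ((-1 : ℤ) ^ (d - j)) * (-1) ^ (d - j) = 1 := by rw [← mul_pow]; norm_num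
  rw [← prod_range_mul_prod_Ico _ hj, hsign]
  calc (2 : ℤ) ^ d = 2 ^ j * 2 ^ (d - j) := by rw [← pow_add, Nat.add_sub_cancel' hj]
    _ ≤ _ := mul_le_mul hlow hhigh (by positivity) ((pow_nonneg zero_le_two _).trans hlow)
    _ = _ := by linear_combination (-(∏ i ∈ range j, (4 * j - 2 - 4 * i : ℤ)) *
        ∏ i ∈ Ico j d, (4 * i + 2 - 4 * j : ℤ)) * hsq

theorem neg_one_pow_mul_eval_frolovPoly_pos {d j : ℕ} (hd : 0 < d) (hj : j ≤ d) :
    0 < (-1) ^ (d - j) * (frolovPoly d).eval (4 * (j : ℤ) - 2) := by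
  have heval : (frolovPoly d).eval (4 * (j : ℤ) - 2) =
      ∏ i ∈ range d, (4 * j - 2 - 4 * i : ℤ) - 1 := by
    simp [frolovPoly, eval_prod, Fin.prod_univ_eq_prod_range (fun i => (4 * j - 2 - 4 * i : ℤ))]
  have h2 : (1 : ℤ) < 2 ^ d := one_lt_pow₀ one_lt_two hd.ne'
  have := two_pow_le_neg_one_pow_mul_prod_range hj
  rw [heval, mul_sub, mul_one]
  rcases neg_one_pow_eq_or ℤ (d - j) with h | h <;> rw [h] at this ⊢ <;> linarith

theorem exists_frolovPoly_root {d j : ℕ} (hj : j < d) :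
    ∃ x ∈ Set.Ioo (4 * j - 2 : ℝ) (4 * j + 2), aeval x (frolovPoly d) = 0 := by
  have hpos := neg_one_pow_mul_eval_frolovPoly_pos (j := j) (by omega) hj.le
  have hpos' := neg_one_pow_mul_eval_frolovPoly_pos (j := j + 1) (by omega) hj
  rw [show d - j = d - (j + 1) + 1 by omega, pow_succ] at hpos
  have hneg : (frolovPoly d).eval (4 * (j : ℤ) - 2) *
      (frolovPoly d).eval (4 * ((j + 1 : ℕ) : ℤ) - 2) < 0 := by
    rcases neg_one_pow_eq_or ℤ (d - (j + 1)) with h | h <;> rw [h] at hpos hpos' <;> nlinarith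
  refine exists_mem_Ioo_eq_zero_of_mul_neg (by linarith)
    (frolovPoly d).continuous_aeval.continuousOn ?_
  have hl := aeval_intCast (A := ℝ) (frolovPoly d) (4 * j - 2)
  have hr := aeval_intCast (A := ℝ) (frolovPoly d) (4 * ((j + 1 : ℕ) : ℤ) - 2)
  push_cast at hl hr
  rw [show (4 * j + 2 : ℝ) = 4 * (j + 1) - 2 by ring, hl, hr]
  exact_mod_cast hneg

theorem exists_strictMono_frolovPoly_roots (d : ℕ) :
    ∃ r : Fin d → ℝ, StrictMono r ∧ ∀ j, aeval (r j) (frolovPoly d) = 0 := by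
  choose r hr using fun j : Fin d => exists_frolovPoly_root j.isLt
  refine ⟨r, fun i j hij => ?_, fun j => (hr j).2⟩
  have hij' : (i : ℝ) + 1 ≤ j := by exact_mod_cast Fin.lt_def.mp hij
  linarith [(hr i).1.2, (hr j).1.1]

theorem statement9 :
    ∀ d : ℕ, 2 ≤ d → ∃ A : Matrix (Fin d) (Fin d) ℝ, IsUnit A.det ∧
      (∀ m : Fin d → ℤ, m ≠ 0 →
        1 ≤ |∏ j, A.mulVec (fun i => (m i : ℝ)) j|) ∧
      (∀ a b : Fin d → ℝ, (∀ j, a j ≤ b j) →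
        {m : Fin d → ℤ |
          A.mulVec (fun i => (m i : ℝ)) ∈ Set.univ.pi fun j => Set.Ico (a j) (b j)}.Finite ∧
        (Nat.card {m : Fin d → ℤ |
          A.mulVec (fun i => (m i : ℝ)) ∈ Set.univ.pi fun j => Set.Ico (a j) (b j)} : ℝ)
          ≤ (∏ j, (b j - a j)) + 1) := by
  intro d hd
  have : Nonempty (Fin d) := ⟨⟨0, by omega⟩⟩
  have hc : Function.Injective fun i : Fin d => 4 * (i : ℤ) := fun i j h =>
    Fin.ext (by simpa using h)
  obtain ⟨r, hr_mono, hr_root⟩ := exists_strictMono_frolovPoly_roots d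
  have hnorm : ∀ m : Fin d → ℤ, m ≠ 0 →
      1 ≤ |∏ j, (Matrix.vandermonde r).mulVec (fun i => (m i : ℝ)) j| := fun m hm =>
    one_le_abs_prod_vandermonde_mulVec (monic_prod_X_sub_C_sub_one _)
      (irreducible_prod_X_sub_C_sub_one hc)
      ((natDegree_prod_X_sub_C_sub_one _).trans (Fintype.card_fin d)) hr_mono.injective hr_root hm
  refine ⟨Matrix.vandermonde r, (Matrix.det_vandermonde_ne_zero_iff.mpr hr_mono.injective).isUnit,
    hnorm, finite_and_card_le_prod_add_one fun m m' hne => ?_⟩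
  have h := hnorm (m - m') (sub_ne_zero.mpr hne)
  rwa [show (fun i => ((m - m') i : ℝ)) = (fun i => (m i : ℝ)) - fun i => (m' i : ℝ) by ext; simp,
    Matrix.mulVec_sub, abs_prod] at h
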